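/- Let ε ∈ (0,1), B = B(Γ,ρ) a regular Bohr set in F_q^d with B' ≺_ε B, and f : F_q^d → ℂ with |f| ≤ 1. Then for all ξ ∈ F_q^d, |μ̂_B(ξ)| ≤ |μ̂_{B'}(ξ)| + ε, where μ_B = (q^d/|B|)1_B. -/

import Mathlib

open Matrix

open scoped Classical in
/-- The Bohr set `B(Γ,ρ)` in `F_q^d` with respect to the additive character `χ`. -/
noncomputable def bohr {F : Type*} [Field F] [Fintype F] {d : ℕ}
    (χ : AddChar F ℂ) (Γ : Finset (Fin d → F)) (ρ : ℝ) : Finset (Fin d → F) :=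
  Finset.univ.filter fun x => ∀ ξ ∈ Γ, ‖χ (dotProduct ξ x) - 1‖ ≤ ρ

/-- Regularity of a Bohr set, in the sense of Bourgain. -/
def BohrRegular {F : Type*} [Field F] [Fintype F] {d : ℕ}
    (χ : AddChar F ℂ) (Γ : Finset (Fin d → F)) (ρ : ℝ) : Prop :=
  ∀ ε : ℝ, 0 < ε →
    ((bohr χ Γ ((1 + ε) * ρ)).card : ℝ) ≤ (1 + 100 * ε * Γ.card) * (bohr χ Γ ρ).card ∧
    (1 - 100 * ε * Γ.card) * ((bohr χ Γ ρ).card : ℝ) ≤ ((bohr χ Γ ((1 - ε) * ρ)).card : ℝ)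

section Aux

variable {F : Type*} [Field F] [Fintype F] {d : ℕ}

lemma mem_bohr_iff (χ : AddChar F ℂ) (Γ : Finset (Fin d → F)) (ρ : ℝ) (x : Fin d → F) :
    x ∈ bohr χ Γ ρ ↔ ∀ ξ ∈ Γ, ‖χ (dotProduct ξ x) - 1‖ ≤ ρ := by
  simp [bohr]

lemma char_abs (χ : AddChar F ℂ) (a : F) : ‖χ a‖ = 1 := by
  exact χ.norm_apply a

lemma char_tri (χ : AddChar F ℂ) (a b : F) :
    ‖χ (a + b) - 1‖ ≤ ‖χ a - 1‖ + ‖χ b - 1‖ := by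
  have h : χ (a + b) - 1 = χ a * (χ b - 1) + (χ a - 1) := by
    rw [AddChar.map_add_eq_mul]; ring
  rw [h]
  refine (norm_add_le _ _).trans ?_
  rw [norm_mul, char_abs, one_mul]
  linarith

lemma zero_mem_bohr (χ : AddChar F ℂ) (Γ : Finset (Fin d → F)) {ρ : ℝ} (hρ : 0 ≤ ρ) :
    (0 : Fin d → F) ∈ bohr χ Γ ρ := by
  rw [mem_bohr_iff]
  intro γ _
  simp [AddChar.map_zero_eq_one, hρ]

lemma bohr_mono (χ : AddChar F ℂ) (Γ : Finset (Fin d → F)) {ρ₁ ρ₂ : ℝ} (h : ρ₁ ≤ ρ₂) :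
    bohr χ Γ ρ₁ ⊆ bohr χ Γ ρ₂ := by
  intro x hx
  rw [mem_bohr_iff] at hx ⊢
  exact fun γ hγ => (hx γ hγ).trans h

/-- Abs of a sum of character values is at most the cardinality. -/
lemma abs_char_sum_le (χ : AddChar F ℂ) (s : Finset (Fin d → F)) (ξ : Fin d → F) :
    ‖∑ x ∈ s, χ (dotProduct ξ x)‖ ≤ s.card := by
  refine (norm_sum_le _ _).trans ?_
  simp [char_abs]

end Aux

set_option maxHeartbeats 1000000 in
/-- For a regular Bohr set `B = B(Γ,ρ)` and `B' = B(Γ',ρ') ≺_ε B`, the Fourier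
coefficients `μ̂_B(ξ) = E_{x ∈ B} χ(ξ·x)` satisfy `|μ̂_B(ξ)| ≤ |μ̂_{B'}(ξ)| + ε`. -/
theorem stmt13 {F : Type*} [Field F] [Fintype F] {d : ℕ}
    (χ : AddChar F ℂ) (Γ Γ' : Finset (Fin d → F)) (ρ ρ' ε : ℝ)
    (hε0 : 0 < ε) (hε1 : ε < 1) (hρ0 : 0 < ρ) (hρ1 : ρ ≤ 1)
    (hreg : BohrRegular χ Γ ρ)
    (hΓ : Γ ⊆ Γ') (hρ'0 : 0 < ρ') (hρ' : ρ' ≤ ε * ρ / (200 * Γ.card))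
    (hreg' : BohrRegular χ Γ' ρ') (ξ : Fin d → F) :
    ‖((bohr χ Γ ρ).card : ℂ)⁻¹ * ∑ x ∈ bohr χ Γ ρ, χ (dotProduct ξ x)‖ ≤
      ‖((bohr χ Γ' ρ').card : ℂ)⁻¹ * ∑ x ∈ bohr χ Γ' ρ', χ (dotProduct ξ x)‖ +
        ε := by
  classical
  -- Γ is nonempty
  have hk0 : 0 < (Γ.card : ℝ) := by
    rcases Nat.eq_zero_or_pos Γ.card with h | h
    · exfalso; rw [h] at hρ'; norm_num at hρ'; linarith
    · exact_mod_cast h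
  set k : ℝ := (Γ.card : ℝ) with hk
  set δ : ℝ := ρ' / ρ with hδ
  have hδ0 : 0 < δ := div_pos hρ'0 hρ0
  have hδρ : δ * ρ = ρ' := div_mul_cancel₀ _ hρ0.ne'
  have h200 : 200 * δ * k ≤ ε := by
    have h1 : ρ' * (200 * k) ≤ ε * ρ := (le_div_iff₀ (by positivity)).mp hρ'
    have h2 : (200 * δ * k) * ρ = ρ' * (200 * k) := by rw [← hδρ]; ring
    nlinarith [h1, h2, hρ0]
  set B := bohr χ Γ ρ with hBdef
  set B' := bohr χ Γ' ρ' with hB'def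
  set Bp := bohr χ Γ ((1 + δ) * ρ) with hBpdef
  set Bm := bohr χ Γ ((1 - δ) * ρ) with hBmdef
  obtain ⟨hplus, hminus⟩ := hreg δ hδ0
  have hBne : (0 : Fin d → F) ∈ B := zero_mem_bohr χ Γ hρ0.le
  have hB'ne : (0 : Fin d → F) ∈ B' := zero_mem_bohr χ Γ' hρ'0.le
  have hnB : (0 : ℝ) < B.card := by
    exact_mod_cast Finset.card_pos.mpr ⟨0, hBne⟩
  have hnB' : (0 : ℝ) < B'.card := by
    exact_mod_cast Finset.card_pos.mpr ⟨0, hB'ne⟩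
  have hcardgap : (Bp.card : ℝ) - Bm.card ≤ ε * B.card := by
    have h1 : (200 * δ * k) * B.card ≤ ε * B.card :=
      mul_le_mul_of_nonneg_right h200 (Nat.cast_nonneg _)
    nlinarith [hplus, hminus]
  -- the key shift estimate
  have key : ∀ y ∈ B',
      ‖(∑ x ∈ B, χ (dotProduct ξ (x + y))) - ∑ x ∈ B, χ (dotProduct ξ x)‖ ≤
        ε * B.card := by
    intro y hy
    have hy' : ∀ γ ∈ Γ, ‖χ (dotProduct γ y) - 1‖ ≤ ρ' := fun γ hγ =>
      (mem_bohr_iff χ Γ' ρ' y).mp hy γ (hΓ hγ)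
    have hinj : Function.Injective (· + y) := fun a b h => by
      simpa using congrArg (· + (-y)) h
    set C := B.image (· + y) with hCdef
    set D := Bm.image (· + y) with hDdef
    have hsum : ∑ z ∈ C, χ (dotProduct ξ z) = ∑ x ∈ B, χ (dotProduct ξ (x + y)) :=
      Finset.sum_image (fun a _ b _ h => hinj h)
    have hCBp : C ⊆ Bp := by
      intro z hz
      obtain ⟨x, hx, rfl⟩ := Finset.mem_image.mp hz
      rw [mem_bohr_iff]
      intro γ hγ
      rw [dotProduct_add]
      refine (char_tri χ _ _).trans ?_
      have h1 := (mem_bohr_iff χ Γ ρ x).mp hx γ hγ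
      have h2 := hy' γ hγ
      nlinarith
    have hBBp : B ⊆ Bp := bohr_mono χ Γ (by nlinarith)
    have hDB : D ⊆ B := by
      intro z hz
      obtain ⟨x, hx, rfl⟩ := Finset.mem_image.mp hz
      rw [mem_bohr_iff]
      intro γ hγ
      rw [dotProduct_add]
      refine (char_tri χ _ _).trans ?_
      have h1 := (mem_bohr_iff χ Γ _ x).mp hx γ hγ
      have h2 := hy' γ hγ
      nlinarith
    have hDC : D ⊆ C := Finset.image_subset_image (bohr_mono χ Γ (by nlinarith))
    have hDBp : D ⊆ Bp := hDB.trans hBBp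
    have hDcard : D.card = Bm.card := Finset.card_image_of_injective _ hinj
    -- rewrite the difference as a difference over symmetric difference pieces
    have e1 : C \ (B ∩ C) = C \ B := Finset.sdiff_inter_self_right C B
    have e2 : B \ (B ∩ C) = B \ C := Finset.sdiff_inter_self_left B C
    have hsplit : (∑ z ∈ C, χ (dotProduct ξ z)) - ∑ z ∈ B, χ (dotProduct ξ z) =
        (∑ z ∈ C \ B, χ (dotProduct ξ z)) - ∑ z ∈ B \ C, χ (dotProduct ξ z) := by
      rw [← Finset.sum_sdiff (Finset.inter_subset_right : B ∩ C ⊆ C),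
        ← Finset.sum_sdiff (Finset.inter_subset_left : B ∩ C ⊆ B), e1, e2]
      ring
    rw [← hsum, hsplit]
    have habs : ‖(∑ z ∈ C \ B, χ (dotProduct ξ z)) -
        ∑ z ∈ B \ C, χ (dotProduct ξ z)‖ ≤ ((C \ B).card : ℝ) + (B \ C).card := by
      refine (norm_sub_le _ _).trans ?_
      exact add_le_add (abs_char_sum_le χ _ ξ) (abs_char_sum_le χ _ ξ)
    refine habs.trans ?_
    -- symmetric difference is contained in Bp \ D
    have hdisj : Disjoint (C \ B) (B \ C) := by
      rw [Finset.disjoint_left]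
      intro z hz1 hz2
      exact (Finset.mem_sdiff.mp hz1).2 (Finset.mem_sdiff.mp hz2).1
    have hsub : (C \ B) ∪ (B \ C) ⊆ Bp \ D := by
      intro z hz
      rcases Finset.mem_union.mp hz with hz | hz
      · obtain ⟨h1, h2⟩ := Finset.mem_sdiff.mp hz
        exact Finset.mem_sdiff.mpr ⟨hCBp h1, fun hD => h2 (hDB hD)⟩
      · obtain ⟨h1, h2⟩ := Finset.mem_sdiff.mp hz
        exact Finset.mem_sdiff.mpr ⟨hBBp h1, fun hD => h2 (hDC hD)⟩
    have hcard1 : ((C \ B).card : ℝ) + (B \ C).card ≤ ((Bp \ D).card : ℝ) := by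
      rw [← Nat.cast_add, ← Finset.card_union_of_disjoint hdisj]
      exact_mod_cast Finset.card_le_card hsub
    refine hcard1.trans ?_
    have hBmBp : Bm.card ≤ Bp.card := by
      rw [← hDcard]; exact Finset.card_le_card hDBp
    have hsd : ((Bp \ D).card : ℝ) = (Bp.card : ℝ) - Bm.card := by
      rw [Finset.card_sdiff_of_subset hDBp, hDcard, Nat.cast_sub hBmBp]
    rw [hsd]; exact hcardgap
  -- assemble
  set S : ℂ := ∑ x ∈ B, χ (dotProduct ξ x) with hS
  set S' : ℂ := ∑ y ∈ B', χ (dotProduct ξ y) with hS'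
  have hSS' : ∑ y ∈ B', ∑ x ∈ B, χ (dotProduct ξ (x + y)) = S * S' := by
    simp_rw [dotProduct_add, AddChar.map_add_eq_mul]
    rw [hS, hS', Finset.sum_mul_sum, Finset.sum_comm]
  have hmain : ‖S * S' - (B'.card : ℂ) * S‖ ≤ B'.card * (ε * B.card) := by
    rw [← hSS']
    have hconst : (B'.card : ℂ) * S = ∑ _y ∈ B', S := by
      rw [Finset.sum_const, nsmul_eq_mul]
    rw [hconst, ← Finset.sum_sub_distrib]
    refine (norm_sum_le _ _).trans ?_
    calc ∑ y ∈ B', ‖(∑ x ∈ B, χ (dotProduct ξ (x + y))) - S‖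
        ≤ ∑ _y ∈ B', ε * B.card := Finset.sum_le_sum (fun y hy => key y hy)
      _ = B'.card * (ε * B.card) := by rw [Finset.sum_const, nsmul_eq_mul]
  set aS : ℝ := ‖S‖ with haS
  set aS' : ℝ := ‖S'‖ with haS'
  have haS0 : 0 ≤ aS := norm_nonneg _
  have haS'0 : 0 ≤ aS' := norm_nonneg _
  have haSle : aS ≤ B.card := abs_char_sum_le χ B ξ
  -- from hmain: B'.card * aS ≤ aS * aS' + B'.card * ε * B.card
  have hineq : (B'.card : ℝ) * aS ≤ aS * aS' + B'.card * (ε * B.card) := by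
    have h1 : ‖(B'.card : ℂ) * S‖ ≤ ‖S * S'‖ +
        ‖S * S' - (B'.card : ℂ) * S‖ := by
      have := norm_sub_le (S * S') ((B'.card : ℂ) * S)
      calc ‖(B'.card : ℂ) * S‖
          = ‖S * S' - (S * S' - (B'.card : ℂ) * S)‖ := by congr 1; ring
        _ ≤ ‖S * S'‖ + ‖S * S' - (B'.card : ℂ) * S‖ :=
            norm_sub_le _ _
    rw [norm_mul, norm_mul, Complex.norm_natCast] at h1
    nlinarith [hmain]
  -- translate the goal
  have hgoalL : ‖((B.card : ℕ) : ℂ)⁻¹ * S‖ = ((B.card : ℝ))⁻¹ * aS := by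
    rw [norm_mul, norm_inv, Complex.norm_natCast]
  have hgoalR : ‖((B'.card : ℕ) : ℂ)⁻¹ * S'‖ = ((B'.card : ℝ))⁻¹ * aS' := by
    rw [norm_mul, norm_inv, Complex.norm_natCast]
  rw [hgoalL, hgoalR]
  set nB : ℝ := (B.card : ℝ)
  set nB' : ℝ := (B'.card : ℝ)
  have h3 : (nB⁻¹ * aS) * (nB * nB') ≤ (nB'⁻¹ * aS' + ε) * (nB * nB') := by
    have e1 : (nB⁻¹ * aS) * (nB * nB') = aS * nB' := by field_simp
    have e2 : (nB'⁻¹ * aS' + ε) * (nB * nB') = aS' * nB + ε * (nB * nB') := by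
      field_simp
    rw [e1, e2]
    nlinarith [hineq, haSle, haS'0, hnB', hnB]
  exact le_of_mul_le_mul_right h3 (by positivity)
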